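/- Suppose v : ℝ → ℝⁿ satisfies v' = -PC⁻¹D_xPv with H̄ = H₂C symmetric positive definite, H̄P = PᵀH̄, and (Pv)ᵀ(H₂D_x + (H₂D_x)ᵀ)(Pv) ≥ 0 for all v. Then t ↦ v(t)ᵀH̄v(t) is non-increasing; in particular the semi-discrete scheme is energy stable. -/

import Mathlib

/-!
Along the flow `v' = -M v` with `M = P C⁻¹ Dₓ P`, the energy `E = vᵀ H̄ v` of a symmetric `H̄`
satisfies `E' = -2 vᵀ H̄ M v`. Since `H̄ = H₂ C` and `H̄ P = Pᵀ H̄`, the factor `C C⁻¹` cancels and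
`H̄ M = Pᵀ (H₂ Dₓ) P`, so `vᵀ H̄ M v` is half the form of `H₂ Dₓ + (H₂ Dₓ)ᵀ` at `P v`, which is
nonnegative. Hence `E' ≤ 0`.
-/

open Matrix

variable {ι R : Type*} [Fintype ι]

theorem HasDerivAt.matrix_mulVec {A : Matrix ι ι ℝ} {v : ℝ → ι → ℝ} {v' : ι → ℝ} {t : ℝ}
    (hv : HasDerivAt v v' t) : HasDerivAt (fun s => A *ᵥ v s) (A *ᵥ v') t := by
  classical
  exact (Matrix.toLin' A).toContinuousLinearMap.hasFDerivAt.comp_hasDerivAt t hv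

theorem HasDerivAt.dotProduct {u w : ℝ → ι → ℝ} {u' w' : ι → ℝ} {t : ℝ}
    (hu : HasDerivAt u u' t) (hw : HasDerivAt w w' t) :
    HasDerivAt (fun s => u s ⬝ᵥ w s) (u' ⬝ᵥ w t + u t ⬝ᵥ w') t := by
  unfold _root_.dotProduct
  rw [← Finset.sum_add_distrib]
  exact HasDerivAt.fun_sum fun i _ => (hasDerivAt_pi.mp hu i).mul (hasDerivAt_pi.mp hw i)

theorem dotProduct_mulVec_comm_of_isSymm [CommSemiring R] {A : Matrix ι ι R} (hA : A.IsSymm)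
    (x y : ι → R) :
    x ⬝ᵥ A *ᵥ y = y ⬝ᵥ A *ᵥ x := by
  rw [dotProduct_mulVec, ← mulVec_transpose, hA, dotProduct_comm]

theorem dotProduct_add_transpose_mulVec_self [CommSemiring R] (A : Matrix ι ι R) (x : ι → R) :
    x ⬝ᵥ (A + Aᵀ) *ᵥ x = 2 * (x ⬝ᵥ A *ᵥ x) := by
  rw [add_mulVec, dotProduct_add, mulVec_transpose, dotProduct_comm x (x ᵥ* A),
    ← dotProduct_mulVec]
  ring

theorem HasDerivAt.dotProduct_mulVec_self_of_isSymm {A : Matrix ι ι ℝ} (hA : A.IsSymm)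
    {v : ℝ → ι → ℝ} {v' : ι → ℝ} {t : ℝ} (hv : HasDerivAt v v' t) :
    HasDerivAt (fun s => v s ⬝ᵥ A *ᵥ v s) (2 * (v t ⬝ᵥ A *ᵥ v')) t := by
  convert hv.dotProduct hv.matrix_mulVec using 1
  rw [dotProduct_mulVec_comm_of_isSymm hA]
  ring

theorem antitone_dotProduct_mulVec_self_of_hasDerivAt {S M : Matrix ι ι ℝ} (hS : S.IsSymm)
    (hSM : ∀ x, 0 ≤ x ⬝ᵥ (S * M) *ᵥ x) {v : ℝ → ι → ℝ}
    (hv : ∀ t, HasDerivAt v (-(M *ᵥ v t)) t) :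
    Antitone fun t => v t ⬝ᵥ S *ᵥ v t := by
  have hE := fun t => (hv t).dotProduct_mulVec_self_of_isSymm hS
  refine antitone_of_deriv_nonpos (fun t => (hE t).differentiableAt) fun t => ?_
  rw [(hE t).deriv, mulVec_neg, dotProduct_neg, mulVec_mulVec]
  linarith [hSM (v t)]

theorem mul_mul_nonsing_inv_mul_eq [DecidableEq ι] [CommRing R]
    {H C P D : Matrix ι ι R} (hC : IsUnit C) (hHP : H * C * P = Pᵀ * (H * C)) :
    H * C * (P * C⁻¹ * D * P) = Pᵀ * (H * D) * P := by
  have hCC : C * C⁻¹ = 1 := mul_nonsing_inv C ((isUnit_iff_isUnit_det C).mp hC)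
  calc H * C * (P * C⁻¹ * D * P) = (H * C * P) * C⁻¹ * D * P := by simp only [Matrix.mul_assoc]
    _ = Pᵀ * H * (C * C⁻¹) * D * P := by rw [hHP]; simp only [Matrix.mul_assoc]
    _ = Pᵀ * (H * D) * P := by rw [hCC]; simp only [Matrix.mul_one, Matrix.mul_assoc]

theorem dotProduct_transpose_mul_mul_mulVec_self [CommSemiring R] (P K : Matrix ι ι R)
    (x : ι → R) :
    x ⬝ᵥ (Pᵀ * K * P) *ᵥ x = P *ᵥ x ⬝ᵥ K *ᵥ P *ᵥ x := by
  rw [← mulVec_mulVec, ← mulVec_mulVec, mulVec_transpose, dotProduct_comm, ← dotProduct_mulVec,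
    dotProduct_comm]

theorem stmt_16_general {n : ℕ} (C H2 Dx P Hbar : Matrix (Fin n) (Fin n) ℝ)
    (hC : IsUnit C)
    (hHbar : Hbar = H2 * C)
    (hHs : Hbar.IsSymm)
    (hHP : Hbar * P = Pᵀ * Hbar)
    (hpos : ∀ w : Fin n → ℝ,
      0 ≤ P.mulVec w ⬝ᵥ (H2 * Dx + (H2 * Dx)ᵀ).mulVec (P.mulVec w))
    (v : ℝ → Fin n → ℝ)
    (hv : ∀ t : ℝ, HasDerivAt v (-(P * C⁻¹ * Dx * P).mulVec (v t)) t) :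
    ∀ s t : ℝ, s ≤ t →
      v t ⬝ᵥ Hbar.mulVec (v t) ≤ v s ⬝ᵥ Hbar.mulVec (v s) := by
  subst hHbar
  have hdiss : ∀ x, 0 ≤ x ⬝ᵥ (H2 * C * (P * C⁻¹ * Dx * P)) *ᵥ x := fun x => by
    have hPx := hpos x
    rw [dotProduct_add_transpose_mulVec_self] at hPx
    rw [mul_mul_nonsing_inv_mul_eq hC hHP, dotProduct_transpose_mul_mul_mulVec_self]
    linarith
  exact fun s t hst => antitone_dotProduct_mulVec_self_of_hasDerivAt hHs hdiss hv hst

theorem stmt_16 {n : ℕ} (C H2 Dx P Hbar : Matrix (Fin n) (Fin n) ℝ)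
    (hC : IsUnit C)
    (hHbar : Hbar = H2 * C)
    (hHpd : Hbar.PosDef) (hHs : Hbar.IsSymm)
    (hHP : Hbar * P = Pᵀ * Hbar)
    (hpos : ∀ w : Fin n → ℝ,
      0 ≤ P.mulVec w ⬝ᵥ (H2 * Dx + (H2 * Dx)ᵀ).mulVec (P.mulVec w))
    (v : ℝ → Fin n → ℝ)
    (hv : ∀ t : ℝ, HasDerivAt v (-(P * C⁻¹ * Dx * P).mulVec (v t)) t) :
    ∀ s t : ℝ, s ≤ t →
      v t ⬝ᵥ Hbar.mulVec (v t) ≤ v s ⬝ᵥ Hbar.mulVec (v s) :=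
  stmt_16_general C H2 Dx P Hbar hC hHbar hHs hHP hpos v hv
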